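/- arXiv:2105.09536 — 4 statements merged into one kernel-verified Lean document; each statement's English description precedes it below -/
import Mathlib

section
/- Suppose there exist M₁, M₂ ∈ φ⁻¹(M°) with θ(φ(M₁)) = θ(φ(M₂)) but θ(M₁) ≠ θ(M₂), and g : Θ → Θ has the property that for every R > 0 there is σ > 0 with ρ(x,y) < σ ⟹ ρ(g(x),g(y)) < R. Then for no solution ĥ of the estimation problem (Θ, ρ, Ω, M°) is g∘ĥ∘φ a solution of (Θ, ρ, Ω, φ⁻¹(M°)). -/
open MeasureTheory

/-- Non-extendibility: if `θ∘φ` identifies two chains that `θ` separates, and `g` is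
uniformly-continuous-like, then it cannot happen that `ĥ` is a solution on `M°` while
`g∘ĥ∘φ` is a solution on `φ⁻¹(M°)`. `law m M` is the law of `ĥ_m(M)`. -/
theorem estimation_no_extension {Mat Θ : Type*} [MetricSpace Θ] [MeasurableSpace Θ]
    (θ : Mat → Θ) (φ : Mat → Mat) (Mo : Set Mat)
    (law : ℕ → Mat → Measure Θ)
    (hprob : ∀ m M, IsProbabilityMeasure (law m M))
    (g : Θ → Θ)
    (M₁ M₂ : Mat) (h₁ : M₁ ∈ φ ⁻¹' Mo) (h₂ : M₂ ∈ φ ⁻¹' Mo)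
    (hθφ : θ (φ M₁) = θ (φ M₂)) (hθ : θ M₁ ≠ θ M₂)
    (hg : ∀ R > (0 : ℝ), ∃ σ > (0 : ℝ), ∀ x y : Θ, dist x y < σ → dist (g x) (g y) < R) :
    ¬ ((∀ ε δ : ℝ, ε ∈ Set.Ioo (0 : ℝ) 1 → δ ∈ Set.Ioo (0 : ℝ) 1 →
          ∃ m₀ : ℕ, ∀ m ≥ m₀,
            (⨆ M ∈ Mo, law m M {x | ε ≤ dist x (θ M)}) < ENNReal.ofReal δ) ∧
        (∀ ε δ : ℝ, ε ∈ Set.Ioo (0 : ℝ) 1 → δ ∈ Set.Ioo (0 : ℝ) 1 →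
          ∃ m₀ : ℕ, ∀ m ≥ m₀,
            (⨆ M ∈ φ ⁻¹' Mo, law m (φ M) {x | ε ≤ dist (g x) (θ M)})
              < ENNReal.ofReal δ)) := by
  intro ⟨H1, H2⟩
  set d := dist (θ M₁) (θ M₂) with hd_def
  have hd : 0 < d := dist_pos.2 hθ
  set ε := min (d / 5) (1 / 2) with hε_def
  have hε : ε ∈ Set.Ioo (0 : ℝ) 1 := by
    constructor
    · exact lt_min (by linarith) (by norm_num)
    · exact lt_of_le_of_lt (min_le_right _ _) (by norm_num)
  obtain ⟨σ, hσ0, hσ⟩ := hg ε hε.1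
  set σ' := min σ (1 / 2) with hσ'_def
  have hσ' : σ' ∈ Set.Ioo (0 : ℝ) 1 := by
    constructor
    · exact lt_min hσ0 (by norm_num)
    · exact lt_of_le_of_lt (min_le_right _ _) (by norm_num)
  have hδ : (1 / 4 : ℝ) ∈ Set.Ioo (0 : ℝ) 1 := by norm_num
  have key : ∀ M, M ∈ φ ⁻¹' Mo → dist (θ M) (g (θ (φ M))) < 2 * ε := by
    intro M hM
    obtain ⟨m₁, hm₁⟩ := H1 σ' (1 / 4) hσ' hδ
    obtain ⟨m₂, hm₂⟩ := H2 ε (1 / 4) hε hδ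
    set m := max m₁ m₂ with hm_def
    have A := hm₁ m (le_max_left _ _)
    have B := hm₂ m (le_max_right _ _)
    have hA : law m (φ M) {x | σ' ≤ dist x (θ (φ M))} < ENNReal.ofReal (1 / 4) := by
      refine lt_of_le_of_lt ?_ A
      exact le_biSup (fun M' => law m M' {x | σ' ≤ dist x (θ M')}) hM
    have hB : law m (φ M) {x | ε ≤ dist (g x) (θ M)} < ENNReal.ofReal (1 / 4) := by
      refine lt_of_le_of_lt ?_ B
      exact le_biSup (fun M' => law m (φ M') {x | ε ≤ dist (g x) (θ M')}) hM
    by_contra hcon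
    push_neg at hcon
    have hsub : (Set.univ : Set Θ) ⊆
        {x | σ' ≤ dist x (θ (φ M))} ∪ {x | ε ≤ dist (g x) (θ M)} := by
      intro x _
      by_contra hx
      simp only [Set.mem_union, Set.mem_setOf_eq, not_or, not_le] at hx
      have h1 : dist (g x) (g (θ (φ M))) < ε :=
        hσ x (θ (φ M)) (lt_of_lt_of_le hx.1 (min_le_left _ _))
      have h2 : dist (θ M) (g (θ (φ M))) < 2 * ε := by
        calc dist (θ M) (g (θ (φ M))) ≤ dist (θ M) (g x) + dist (g x) (g (θ (φ M))) :=
              dist_triangle _ _ _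
          _ < ε + ε := by rw [dist_comm (θ M) (g x)]; exact add_lt_add hx.2 h1
          _ = 2 * ε := by ring
      exact absurd h2 (not_lt.2 hcon)
    haveI := hprob m (φ M)
    have h1 : (1 : ENNReal) = law m (φ M) Set.univ := (measure_univ).symm
    have hle : law m (φ M) Set.univ ≤
        law m (φ M) {x | σ' ≤ dist x (θ (φ M))} + law m (φ M) {x | ε ≤ dist (g x) (θ M)} :=
      le_trans (measure_mono hsub) (measure_union_le _ _)
    have : (1 : ENNReal) < ENNReal.ofReal (1 / 4) + ENNReal.ofReal (1 / 4) := by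
      rw [h1]
      exact lt_of_le_of_lt hle (ENNReal.add_lt_add hA hB)
    rw [← ENNReal.ofReal_add (by norm_num) (by norm_num)] at this
    have hlt : ENNReal.ofReal (1 / 4 + 1 / 4) < 1 := by
      rw [ENNReal.ofReal_lt_one]; norm_num
    exact absurd this (not_lt.2 hlt.le)
  have k1 := key M₁ h₁
  have k2 := key M₂ h₂
  rw [hθφ] at k1
  have : d < 4 * ε := by
    calc d ≤ dist (θ M₁) (g (θ (φ M₂))) + dist (g (θ (φ M₂))) (θ M₂) := dist_triangle _ _ _
      _ < 2 * ε + 2 * ε := add_lt_add k1 (by rw [dist_comm]; exact k2)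
      _ = 4 * ε := by ring
  have : 4 * ε ≤ 4 * (d / 5) := by
    have := min_le_left (d / 5) (1 / 2); linarith
  linarith
end

section
/- Let M be an ergodic row-stochastic d×d matrix and α ∈ (0,1). Then the spectral gap of the multiplicative reversibilization of the lazy chain satisfies γ(L_α(M)†) ≥ (1-α)·γ(M†), where L_α(M) = αI + (1-α)M. -/
/-- The Dirichlet-form variational characterization of the spectral gap of a chain `N`
reversible w.r.t. `π`: `γ(N) = inf { ½ Σ_{i,j} (f i - f j)² π i N i j : E_π[f]=0, E_π[f²]=1 }`. -/
noncomputable def dirichletGap {d : ℕ} (π : Fin d → ℝ) (N : Matrix (Fin d) (Fin d) ℝ) : ℝ :=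
  sInf {v : ℝ | ∃ f : Fin d → ℝ, (∑ i, π i * f i) = 0 ∧ (∑ i, π i * f i ^ 2) = 1 ∧
    v = (1 / 2) * ∑ i, ∑ j, (f i - f j) ^ 2 * π i * N i j}

/-- The time reversal `M* = diag(π)⁻¹ Mᵀ diag(π)`. -/
noncomputable def timeReversal {d : ℕ} (π : Fin d → ℝ) (M : Matrix (Fin d) (Fin d) ℝ) :
    Matrix (Fin d) (Fin d) ℝ :=
  Matrix.of fun i j => π j * M j i / π i

lemma double_sum_expand {d : ℕ} (f r : Fin d → ℝ) (hr : ∑ j, r j = 1) :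
    ∑ i, ∑ j, (f i - f j) ^ 2 * (r i * r j)
      = 2 * (∑ i, r i * f i ^ 2) - 2 * (∑ i, r i * f i) ^ 2 := by
  have h1 : ∀ i : Fin d, ∑ j, (f i - f j) ^ 2 * (r i * r j)
      = (f i ^ 2 * r i) * (∑ j, r j) + r i * (∑ j, r j * f j ^ 2)
        - (2 * r i * f i) * (∑ j, r j * f j) := by
    intro i
    rw [Finset.mul_sum, Finset.mul_sum, Finset.mul_sum,
      ← Finset.sum_add_distrib, ← Finset.sum_sub_distrib]
    exact Finset.sum_congr rfl fun j _ => by ring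
  have h2 : ∑ i, ∑ j, (f i - f j) ^ 2 * (r i * r j)
      = ∑ i, ((f i ^ 2 * r i) * (∑ j, r j) + r i * (∑ j, r j * f j ^ 2)
        - (2 * r i * f i) * (∑ j, r j * f j)) := Finset.sum_congr rfl fun i _ => h1 i
  rw [h2, Finset.sum_sub_distrib, Finset.sum_add_distrib, ← Finset.sum_mul, ← Finset.sum_mul,
    ← Finset.sum_mul, hr]
  have h3 : ∑ i, f i ^ 2 * r i = ∑ i, r i * f i ^ 2 :=
    Finset.sum_congr rfl fun i _ => by ring
  have h4 : ∑ i, 2 * r i * f i = 2 * ∑ i, r i * f i := by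
    rw [Finset.mul_sum]; exact Finset.sum_congr rfl fun i _ => by ring
  rw [h3, h4]
  ring

lemma reversibilization_form {d : ℕ} (π : Fin d → ℝ) (hπ0 : ∀ i, 0 < π i)
    (N : Matrix (Fin d) (Fin d) ℝ) (hN1 : ∀ i, ∑ j, N i j = 1)
    (hNs : ∀ j, ∑ i, π i * N i j = π j) (f : Fin d → ℝ) :
    (1 / 2) * ∑ i, ∑ j, (f i - f j) ^ 2 * π i * (timeReversal π N * N) i j
      = ∑ i, π i * f i ^ 2 - ∑ k, π k * (∑ j, N k j * f j) ^ 2 := by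
  have hentry : ∀ i j, (f i - f j) ^ 2 * π i * (timeReversal π N * N) i j
      = ∑ k, (f i - f j) ^ 2 * (π k * (N k i * N k j)) := by
    intro i j
    rw [Matrix.mul_apply, Finset.mul_sum]
    refine Finset.sum_congr rfl fun k _ => ?_
    simp only [timeReversal, Matrix.of_apply]
    field_simp [(hπ0 i).ne']
  have hswap : ∑ i, ∑ j, (f i - f j) ^ 2 * π i * (timeReversal π N * N) i j
      = ∑ k, ∑ i, ∑ j, (f i - f j) ^ 2 * (π k * (N k i * N k j)) := by
    simp_rw [hentry]
    rw [show (∑ i, ∑ j, ∑ k, (f i - f j) ^ 2 * (π k * (N k i * N k j)))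
        = ∑ i, ∑ k, ∑ j, (f i - f j) ^ 2 * (π k * (N k i * N k j)) from
      Finset.sum_congr rfl fun i _ => Finset.sum_comm]
    exact Finset.sum_comm
  rw [hswap]
  have hinner : ∀ k, ∑ i, ∑ j, (f i - f j) ^ 2 * (π k * (N k i * N k j))
      = π k * (2 * (∑ i, N k i * f i ^ 2) - 2 * (∑ i, N k i * f i) ^ 2) := by
    intro k
    rw [← double_sum_expand f (fun i => N k i) (hN1 k), Finset.mul_sum]
    refine Finset.sum_congr rfl fun i _ => ?_
    rw [Finset.mul_sum]
    exact Finset.sum_congr rfl fun j _ => by ring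
  simp_rw [hinner]
  have hA : ∑ k, π k * (∑ i, N k i * f i ^ 2) = ∑ i, π i * f i ^ 2 := by
    simp_rw [Finset.mul_sum]
    rw [Finset.sum_comm]
    refine Finset.sum_congr rfl fun i _ => ?_
    rw [← hNs i, Finset.sum_mul]
    exact Finset.sum_congr rfl fun k _ => by ring
  have : ∑ k, π k * (2 * (∑ i, N k i * f i ^ 2) - 2 * (∑ i, N k i * f i) ^ 2)
      = 2 * (∑ k, π k * (∑ i, N k i * f i ^ 2)) - 2 * ∑ k, π k * (∑ j, N k j * f j) ^ 2 := by
    rw [Finset.mul_sum, Finset.mul_sum, ← Finset.sum_sub_distrib]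
    exact Finset.sum_congr rfl fun k _ => by ring
  rw [this, hA]
  ring

theorem lazy_gap_aux {d : ℕ} (hd : 2 ≤ d)
    (M : Matrix (Fin d) (Fin d) ℝ) (π : Fin d → ℝ) (α : ℝ)
    (hα : α ∈ Set.Ioo (0 : ℝ) 1)
    (hM1 : ∀ i j, 0 ≤ M i j) (hM2 : ∀ i, ∑ j, M i j = 1)
    (herg : ∃ t : ℕ, ∀ i j, 0 < (M ^ t) i j)
    (hπ0 : ∀ i, 0 < π i) (hπ1 : ∑ i, π i = 1)
    (hstat : ∀ j, ∑ i, π i * M i j = π j) :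
    sInf {v : ℝ | ∃ f : Fin d → ℝ, (∑ i, π i * f i) = 0 ∧ (∑ i, π i * f i ^ 2) = 1 ∧
      v = (1 / 2) * ∑ i, ∑ j, (f i - f j) ^ 2 * π i *
        (timeReversal π (α • 1 + (1 - α) • M) * (α • 1 + (1 - α) • M)) i j}
      ≥ (1 - α) * sInf {v : ℝ | ∃ f : Fin d → ℝ, (∑ i, π i * f i) = 0 ∧
        (∑ i, π i * f i ^ 2) = 1 ∧
        v = (1 / 2) * ∑ i, ∑ j, (f i - f j) ^ 2 * π i * (timeReversal π M * M) i j} := by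
  obtain ⟨hα0, hα1⟩ := hα
  set L : Matrix (Fin d) (Fin d) ℝ := α • 1 + (1 - α) • M with hLdef
  have hLe : ∀ i j, L i j = α * (if i = j then 1 else 0) + (1 - α) * M i j := by
    intro i j
    simp [hLdef, Matrix.add_apply, Matrix.smul_apply, Matrix.one_apply, smul_eq_mul]
  have hL1 : ∀ i, ∑ j, L i j = 1 := by
    intro i
    simp only [hLe]
    rw [Finset.sum_add_distrib, ← Finset.mul_sum, ← Finset.mul_sum, hM2 i]
    simp
  have hLs : ∀ j, ∑ i, π i * L i j = π j := by
    intro j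
    have : ∀ i, π i * L i j = α * (if i = j then π i else 0) + (1 - α) * (π i * M i j) := by
      intro i
      rw [hLe]
      by_cases h : i = j <;> simp [h] <;> ring
    simp only [this]
    rw [Finset.sum_add_distrib, ← Finset.mul_sum, ← Finset.mul_sum, hstat j,
      Finset.sum_ite_eq' Finset.univ j π]
    simp
    ring
  have hLf : ∀ f : Fin d → ℝ, ∀ k, ∑ j, L k j * f j
      = α * f k + (1 - α) * ∑ j, M k j * f j := by
    intro f k
    have : ∀ j, L k j * f j = α * (if k = j then f j else 0) + (1 - α) * (M k j * f j) := by
      intro j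
      rw [hLe]
      by_cases h : k = j <;> simp [h] <;> ring
    simp only [this]
    rw [Finset.sum_add_distrib, ← Finset.mul_sum, ← Finset.mul_sum,
      Finset.sum_ite_eq Finset.univ k f]
    simp
  have key : ∀ f : Fin d → ℝ,
      (1 - α) * ((1 / 2) * ∑ i, ∑ j, (f i - f j) ^ 2 * π i * (timeReversal π M * M) i j)
      ≤ (1 / 2) * ∑ i, ∑ j, (f i - f j) ^ 2 * π i * (timeReversal π L * L) i j := by
    intro f
    rw [reversibilization_form π hπ0 M hM2 hstat f,
      reversibilization_form π hπ0 L hL1 hLs f]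
    simp only [hLf f]
    have hsum : ∑ k, π k * (α * f k + (1 - α) * ∑ j, M k j * f j) ^ 2
        ≤ α * (∑ k, π k * f k ^ 2) + (1 - α) * ∑ k, π k * (∑ j, M k j * f j) ^ 2 := by
      rw [Finset.mul_sum, Finset.mul_sum, ← Finset.sum_add_distrib]
      refine Finset.sum_le_sum fun k _ => ?_
      have h1 : (α * f k + (1 - α) * ∑ j, M k j * f j) ^ 2
          ≤ α * f k ^ 2 + (1 - α) * (∑ j, M k j * f j) ^ 2 := by
        nlinarith [sq_nonneg (f k - ∑ j, M k j * f j), mul_pos hα0 (sub_pos.mpr hα1)]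
      nlinarith [(hπ0 k).le]
    nlinarith [(le_refl (1:ℝ))]
  have hMdag_nonneg : ∀ i j, 0 ≤ (timeReversal π M * M) i j := by
    intro i j
    rw [Matrix.mul_apply]
    exact Finset.sum_nonneg fun k _ => mul_nonneg
      (div_nonneg (mul_nonneg (hπ0 k).le (hM1 k i)) (hπ0 i).le) (hM1 k j)
  set SM := {v : ℝ | ∃ f : Fin d → ℝ, (∑ i, π i * f i) = 0 ∧ (∑ i, π i * f i ^ 2) = 1 ∧
      v = (1 / 2) * ∑ i, ∑ j, (f i - f j) ^ 2 * π i * (timeReversal π M * M) i j} with hSM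
  have hSMlb : ∀ v ∈ SM, (0:ℝ) ≤ v := by
    rintro v ⟨f, -, -, rfl⟩
    exact mul_nonneg (by norm_num) (Finset.sum_nonneg fun i _ => Finset.sum_nonneg fun j _ =>
      mul_nonneg (mul_nonneg (sq_nonneg _) (hπ0 i).le) (hMdag_nonneg i j))
  by_cases hne : ∃ f : Fin d → ℝ, (∑ i, π i * f i) = 0 ∧ (∑ i, π i * f i ^ 2) = 1
  · obtain ⟨f0, hf1, hf2⟩ := hne
    rw [ge_iff_le]
    refine le_csInf ⟨(1 / 2) * ∑ i, ∑ j, (f0 i - f0 j) ^ 2 * π i *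
      (timeReversal π L * L) i j, f0, hf1, hf2, rfl⟩ ?_
    rintro v ⟨f, hfa, hfb, rfl⟩
    calc (1 - α) * sInf SM
        ≤ (1 - α) * ((1 / 2) * ∑ i, ∑ j, (f i - f j) ^ 2 * π i * (timeReversal π M * M) i j) :=
          mul_le_mul_of_nonneg_left (csInf_le ⟨0, hSMlb⟩ ⟨f, hfa, hfb, rfl⟩)
            (by linarith)
      _ ≤ _ := key f
  · have e1 : SM = ∅ := by
      rw [hSM]
      ext v
      simp only [Set.mem_setOf_eq, Set.mem_empty_iff_false, iff_false]
      rintro ⟨f, h1, h2, -⟩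
      exact hne ⟨f, h1, h2⟩
    have e2 : {v : ℝ | ∃ f : Fin d → ℝ, (∑ i, π i * f i) = 0 ∧ (∑ i, π i * f i ^ 2) = 1 ∧
        v = (1 / 2) * ∑ i, ∑ j, (f i - f j) ^ 2 * π i * (timeReversal π L * L) i j} = ∅ := by
      ext v
      simp only [Set.mem_setOf_eq, Set.mem_empty_iff_false, iff_false]
      rintro ⟨f, h1, h2, -⟩
      exact hne ⟨f, h1, h2⟩
    rw [e1, e2, Real.sInf_empty]
    norm_num

/-- For ergodic `M`, the spectral gap of the multiplicative reversibilization of the α-lazy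
chain satisfies `γ(L_α(M)†) ≥ (1-α)·γ(M†)`. -/
theorem lazy_reversibilization_gap {d : ℕ} (hd : 2 ≤ d)
    (M : Matrix (Fin d) (Fin d) ℝ) (π : Fin d → ℝ) (α : ℝ)
    (hα : α ∈ Set.Ioo (0 : ℝ) 1)
    (hM1 : ∀ i j, 0 ≤ M i j) (hM2 : ∀ i, ∑ j, M i j = 1)
    (herg : ∃ t : ℕ, ∀ i j, 0 < (M ^ t) i j)
    (hπ0 : ∀ i, 0 < π i) (hπ1 : ∑ i, π i = 1)
    (hstat : ∀ j, ∑ i, π i * M i j = π j) :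
    dirichletGap π
        (timeReversal π (α • 1 + (1 - α) • M) * (α • 1 + (1 - α) • M))
      ≥ (1 - α) * dirichletGap π (timeReversal π M * M) := by
  unfold dirichletGap
  exact lazy_gap_aux hd M π α hα hM1 hM2 herg hπ0 hπ1 hstat
end

section
/- Let x ∈ ℝ^d with ℓ1-norm ||x||₁ = 1 and let y ∈ Δ_d (the probability simplex). Suppose ||x - y||₁ < ε for some ε > 0. Then there exists x' ∈ Δ_d which is an ℓ1-projection of x onto Δ_d (i.e., x' minimizes ||z - x||₁ over z ∈ Δ_d) satisfying ||x' - y||₁ < ε. In particular, there exists x' ∈ Δ_d with Σᵢ|x'ᵢ - xᵢ| minimal among all points of Δ_d and Σᵢ|x'ᵢ - yᵢ| < ε. -/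
/-!
Take `x'` on the segment from `x⁺` towards `y`, coordinatewise: `x' = x⁺ + c • (y - x⁺)⁺` with
`c ∈ [0, 1]` chosen so that `∑ x' = 1`; this is possible because `∑ x⁺ ≤ ∑ |x| = 1 = ∑ y`.
Since `x ≤ x'`, the ℓ1-distance from `x` to `x'` is `∑ (x' - x) = 1 - ∑ x`, which no point of
the simplex can beat. Each coordinate `x'ᵢ` lies between `xᵢ` and `yᵢ`, so
`|x'ᵢ - yᵢ| ≤ |xᵢ - yᵢ|`.
-/

open Finset

theorem abs_posPart_sub_le {a b : ℝ} (hb : 0 ≤ b) : |a⁺ - b| ≤ |a - b| := by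
  simpa only [posPart_def, max_eq_left hb] using abs_max_sub_max_le_abs a b 0

theorem abs_posPart_add_mul_posPart_sub_le {a b c : ℝ} (hb : 0 ≤ b) (hc0 : 0 ≤ c)
    (hc1 : c ≤ 1) : |a⁺ + c * (b - a⁺)⁺ - b| ≤ |a - b| := by
  rcases le_total b a⁺ with hba | hab
  · rw [posPart_eq_zero.2 (sub_nonpos.2 hba), mul_zero, add_zero]
    exact abs_posPart_sub_le hb
  · rw [posPart_eq_self.2 (sub_nonneg.2 hab)]
    have hmem : a⁺ + c * (b - a⁺) ∈ Set.uIcc b a⁺ :=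
      Set.mem_uIcc_of_ge (le_add_of_nonneg_right (mul_nonneg hc0 (sub_nonneg.2 hab)))
        (le_sub_iff_add_le'.1 (mul_le_of_le_one_left (sub_nonneg.2 hab) hc1))
    exact (Set.abs_sub_left_of_mem_uIcc hmem).trans (abs_posPart_sub_le hb)

theorem exists_mem_Icc_mul_eq {s r : ℝ} (hs : 0 ≤ s) (hsr : s ≤ r) :
    ∃ c ∈ Set.Icc (0 : ℝ) 1, c * r = s := by
  rcases (hs.trans hsr).eq_or_lt with hr | hr
  · exact ⟨0, ⟨le_rfl, zero_le_one⟩, by linarith⟩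
  · exact ⟨s / r, ⟨div_nonneg hs hr.le, (div_le_one hr).2 hsr⟩, div_mul_cancel₀ s hr.ne'⟩

variable {ι : Type*} [Fintype ι]

theorem sum_abs_sub_le_of_le_of_sum_eq {x w z : ι → ℝ} (hxw : x ≤ w)
    (hwz : ∑ i, w i = ∑ i, z i) : ∑ i, |w i - x i| ≤ ∑ i, |z i - x i| :=
  calc ∑ i, |w i - x i| = ∑ i, (w i - x i) :=
        sum_congr rfl fun i _ => abs_of_nonneg (sub_nonneg.2 (hxw i))
    _ = ∑ i, (z i - x i) := by simp only [sum_sub_distrib, hwz]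
    _ ≤ ∑ i, |z i - x i| := sum_le_sum fun i _ => le_abs_self _

theorem exists_simplex_ge_and_abs_sub_le {x y : ι → ℝ} (hx : ∑ i, (x i)⁺ ≤ 1)
    (hy0 : 0 ≤ y) (hy1 : ∑ i, y i = 1) :
    ∃ x' : ι → ℝ, 0 ≤ x' ∧ ∑ i, x' i = 1 ∧ x ≤ x' ∧ ∀ i, |x' i - y i| ≤ |x i - y i| := by
  have hdeficit : 1 - ∑ i, (x i)⁺ ≤ ∑ i, (y i - (x i)⁺)⁺ := by
    rw [← hy1, ← sum_sub_distrib]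
    exact sum_le_sum fun i _ => le_posPart _
  obtain ⟨c, ⟨hc0, hc1⟩, hc⟩ := exists_mem_Icc_mul_eq (sub_nonneg.2 hx) hdeficit
  refine ⟨fun i => (x i)⁺ + c * (y i - (x i)⁺)⁺, fun i => ?_, ?_, fun i => ?_, fun i => ?_⟩
  · exact add_nonneg (posPart_nonneg _) (mul_nonneg hc0 (posPart_nonneg _))
  · rw [sum_add_distrib, ← mul_sum, hc, add_sub_cancel]
  · exact (le_posPart _).trans (le_add_of_nonneg_right (mul_nonneg hc0 (posPart_nonneg _)))
  · exact abs_posPart_add_mul_posPart_sub_le (hy0 i) hc0 hc1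

theorem l1_projection_close_general {d : ℕ}
    (x y : Fin d → ℝ) (ε : ℝ)
    (hx : ∑ i, |x i| = 1)
    (hy0 : ∀ i, 0 ≤ y i) (hy1 : ∑ i, y i = 1)
    (hxy : ∑ i, |x i - y i| < ε) :
    ∃ x' : Fin d → ℝ, (∀ i, 0 ≤ x' i) ∧ (∑ i, x' i = 1) ∧
      (∀ z : Fin d → ℝ, (∀ i, 0 ≤ z i) → ∑ i, z i = 1 →
        ∑ i, |x' i - x i| ≤ ∑ i, |z i - x i|) ∧
      ∑ i, |x' i - y i| < ε := by
  have hpos : ∑ i, (x i)⁺ ≤ 1 :=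
    hx ▸ sum_le_sum fun i _ => max_le (le_abs_self (x i)) (abs_nonneg (x i))
  obtain ⟨x', hx'0, hx'1, hxx', hclose⟩ := exists_simplex_ge_and_abs_sub_le hpos hy0 hy1
  refine ⟨x', hx'0, hx'1, fun z _ hz1 => ?_, ?_⟩
  · exact sum_abs_sub_le_of_le_of_sum_eq hxx' (hx'1.trans hz1.symm)
  · exact (sum_le_sum fun i _ => hclose i).trans_lt hxy

/-- If `‖x‖₁ = 1` and `y` is in the probability simplex with `‖x - y‖₁ < ε`, then there is
an ℓ1-projection `x'` of `x` onto the simplex with `‖x' - y‖₁ < ε`. -/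
theorem l1_projection_close {d : ℕ} (hd : 2 ≤ d)
    (x y : Fin d → ℝ) (ε : ℝ) (hε : 0 < ε)
    (hx : ∑ i, |x i| = 1)
    (hy0 : ∀ i, 0 ≤ y i) (hy1 : ∑ i, y i = 1)
    (hxy : ∑ i, |x i - y i| < ε) :
    ∃ x' : Fin d → ℝ, (∀ i, 0 ≤ x' i) ∧ (∑ i, x' i = 1) ∧
      (∀ z : Fin d → ℝ, (∀ i, 0 ≤ z i) → ∑ i, z i = 1 →
        ∑ i, |x' i - x i| ≤ ∑ i, |z i - x i|) ∧
      ∑ i, |x' i - y i| < ε :=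
  l1_projection_close_general x y ε hx hy0 hy1 hxy
end

section
/- Let x ∈ ℝ^d, S = {i : xᵢ < 0}, and s = Σ_{i∉S} xᵢ, with S ≠ [d] and s = 1. Define y ∈ Δ_d by yᵢ = 0 for i ∈ S and yᵢ = xᵢ for i ∉ S. Then y minimizes ||z - x||₁ over all z ∈ Δ_d, i.e., for every z ∈ Δ_d, Σᵢ|zᵢ - xᵢ| ≥ Σᵢ|yᵢ - xᵢ| = Σ_{i∈S}|xᵢ|. -/
open Finset

/-- If the nonnegative coordinates of `x` sum to 1 (and some coordinate is nonnegative),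
then zeroing out the negative coordinates yields an ℓ1-projection of `x` onto the
probability simplex, at ℓ1-distance `Σ_{i∈S} |x i|`. -/
theorem l1_projection_zeroing {d : ℕ} (hd : 2 ≤ d) (x : Fin d → ℝ)
    (hS : {i : Fin d | x i < 0} ≠ Set.univ)
    (hs : ∑ i ∈ univ.filter (fun i => ¬ x i < 0), x i = 1) :
    let y : Fin d → ℝ := fun i => if x i < 0 then 0 else x i
    (∀ i, 0 ≤ y i) ∧ (∑ i, y i = 1) ∧
    (∀ z : Fin d → ℝ, (∀ i, 0 ≤ z i) → ∑ i, z i = 1 →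
      ∑ i, |z i - x i| ≥ ∑ i, |y i - x i|) ∧
    ∑ i, |y i - x i| = ∑ i ∈ univ.filter (fun i => x i < 0), |x i| := by
  intro y
  have habs : ∀ i, |y i - x i| = if x i < 0 then |x i| else 0 := by
    intro i
    by_cases h : x i < 0 <;> simp [y, h, abs_of_neg, abs_of_nonneg, abs_sub_comm]
  refine ⟨?_, ?_, ?_, ?_⟩
  · intro i
    by_cases h : x i < 0 <;> simp [y, h] <;> linarith
  · calc ∑ i, y i = ∑ i ∈ univ.filter (fun i => x i < 0), (0:ℝ)
          + ∑ i ∈ univ.filter (fun i => ¬ x i < 0), x i := Finset.sum_ite _ _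
    _ = 1 := by
          rw [Finset.sum_const_zero, zero_add, hs]
  · intro z hz hzs
    apply Finset.sum_le_sum
    intro i _
    rw [habs]
    by_cases h : x i < 0
    · simp only [h, if_pos]
      have : |z i - x i| = z i - x i := abs_of_nonneg (by linarith [hz i])
      rw [this, abs_of_neg h]; linarith [hz i]
    · simp [h, abs_nonneg]
  · calc ∑ i, |y i - x i| = ∑ i, (if x i < 0 then |x i| else 0) := by
          simp_rw [habs]
    _ = ∑ i ∈ univ.filter (fun i => x i < 0), |x i| := by
          rw [Finset.sum_ite, Finset.sum_const_zero, add_zero]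
end
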